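/- (Translation invariance of TING, Lemma 2 part 1.) For every function f : ℝ × ℝ → ℝ, every d = (d₁, d₂) : ℝ × ℝ and all θ, ω : ℝ, the TING of the translated image equals the TING of f: M (fun p => f (p - d)) θ ω = M f θ ω. No integrability hypotheses on f are needed: the Radon transform of the translated image is a τ-shift of R f θ, and shifting a function changes its Fourier integral only by a unimodular factor, leaving the magnitude unchanged. -/

import Mathlib

open MeasureTheory Real

/-- Radon transform of an image `f : ℝ × ℝ → ℝ`. -/
noncomputable def Radon (f : ℝ × ℝ → ℝ) (θ τ : ℝ) : ℝ :=
  ∫ t : ℝ, f (τ * Real.cos θ - t * Real.sin θ, τ * Real.sin θ + t * Real.cos θ)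

/-- TING of `f`: magnitude of the Fourier integral (along `τ`) of the sinogram row `θ`. -/
noncomputable def TING (f : ℝ × ℝ → ℝ) (θ ω : ℝ) : ℝ :=
  ‖FourierTransform.fourier (fun τ => (Radon f θ τ : ℂ)) ω‖

/-! Translating the image by `d` moves the line `x cos θ + y sin θ = τ` onto the line with
offset `τ - ⟪d, (cos θ, sin θ)⟫`, so each sinogram row is shifted in `τ`; a shift only multiplies
the Fourier integral by a unimodular phase. Both steps are changes of variables under
translation-invariant Lebesgue measure. -/

theorem Real.norm_fourier_comp_sub_right {V E : Type*} [NormedAddCommGroup V]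
    [InnerProductSpace ℝ V] [MeasurableSpace V] [BorelSpace V] [FiniteDimensional ℝ V]
    [NormedAddCommGroup E] [NormedSpace ℂ E] (f : V → E) (v₀ w : V) :
    ‖FourierTransform.fourier (fun v => f (v - v₀)) w‖ = ‖FourierTransform.fourier f w‖ := by
  have hshift := VectorFourier.fourierIntegral_comp_add_right Real.fourierChar volume
    (innerₗ V) f (-v₀)
  simp only [← sub_eq_add_neg] at hshift
  exact congrArg (‖·‖) (congrFun hshift w) |>.trans (Circle.norm_smul _ _)

theorem Radon_comp_sub (f : ℝ × ℝ → ℝ) (d : ℝ × ℝ) (θ τ : ℝ) :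
    Radon (fun p => f (p - d)) θ τ
      = Radon f θ (τ - (d.1 * Real.cos θ + d.2 * Real.sin θ)) := by
  rw [Radon, Radon, ← integral_add_right_eq_self _ (d.2 * Real.cos θ - d.1 * Real.sin θ)]
  congr 1 with t
  have hpyth := Real.sin_sq_add_cos_sq θ
  congr 1
  ext
  · simp only [Prod.fst_sub]
    linear_combination d.1 * hpyth
  · simp only [Prod.snd_sub]
    linear_combination d.2 * hpyth

/-- Translation invariance of TING (Lemma 2, part 1). -/
theorem TING_translation_invariant (f : ℝ × ℝ → ℝ) (d : ℝ × ℝ) (θ ω : ℝ) :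
    TING (fun p => f (p - d)) θ ω = TING f θ ω := by
  simp only [TING, Radon_comp_sub]
  exact Real.norm_fourier_comp_sub_right (fun τ => (Radon f θ τ : ℂ)) _ ω
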